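/- arXiv:2308.12265 — 2 statements merged into one kernel-verified Lean document; each statement's English description precedes it below -/
import Mathlib

section
/- In the robust connection game on the reduction instance: if the traveler arrives at the entry vertex s_i of an existential gadget 𝒢^∃_i at a timestamp t ≤ t_{s_i}, then the adversary cannot prevent the traveler from arriving at s_{i+1} at a timestamp t' ≤ t_{s_{i+1}} by delaying any or all arcs of the paths P_i and P̄_i. -/
namespace RCG

/-- A temporal graph: a set `V` of vertices and a set `E` of temporal arcs, where each
temporal arc `e` has a tail vertex, a head vertex, a time label `time e > 0` (the point in
time after which `e` is unavailable) and a traversal time `len e > 0`.  The arrival time of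
`e` is `time e + len e`. -/
structure TempGraph (V E : Type) where
  tail : E → V
  head : E → V
  time : E → ℕ
  len  : E → ℕ

section Game

variable {V E : Type} [DecidableEq E]

/-- Time label of the arc `e` in the `(D, δ)`-delayed graph `G_(D,δ)`: arcs in `D` have
their time label increased by `δ`. -/
def dtime (G : TempGraph V E) (δ : ℕ) (D : Finset E) (e : E) : ℕ :=
  if e ∈ D then G.time e + δ else G.time e

/-- Arrival time `arr_{G_(D,δ)}(e)` of the arc `e` in the `(D, δ)`-delayed graph. -/
def darr (G : TempGraph V E) (δ : ℕ) (D : Finset E) (e : E) : ℕ :=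
  dtime G δ D e + G.len e

/-- An admissible announcement of the adversary in the game state `(v, t, D)` with budget
`x`: a set `D'` of not-yet-delayed arcs, each with tail `v` and time label `≥ t`, such that
the total number of delayed arcs does not exceed `x`. -/
def Announce (G : TempGraph V E) (x : ℕ) (v : V) (t : ℕ) (D D' : Finset E) : Prop :=
  (∀ e ∈ D', e ∉ D ∧ G.tail e = v ∧ t ≤ G.time e) ∧ D.card + D'.card ≤ x

/-- `TWins G z x δ v t D`: in the robust connection game on `G` with destination `z`,
delay budget `x` and delay `δ`, the traveler has a winning strategy in the game state
`(v, t, D)` (current vertex `v`, current timestamp `t`, set `D` of already-delayed arcs):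
either the traveler is already at `z`, or there is a strategy `f` choosing, for every
admissible announcement `D'` of the adversary, an available arc `f D' h` of `G_(D ∪ D', δ)`
with tail `v` and (delayed) time label `≥ t` whose traversal leads to a game state in which
the traveler again has a winning strategy. -/
inductive TWins (G : TempGraph V E) (z : V) (x δ : ℕ) : V → ℕ → Finset E → Prop
  | win (t : ℕ) (D : Finset E) : TWins G z x δ z t D
  | move (v : V) (t : ℕ) (D : Finset E)
      (f : ∀ D' : Finset E, Announce G x v t D D' → E)
      (hf : ∀ (D' : Finset E) (h : Announce G x v t D D'),
        G.tail (f D' h) = v ∧ t ≤ dtime G δ (D ∪ D') (f D' h)) :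
      (∀ (D' : Finset E) (h : Announce G x v t D D'),
        TWins G z x δ (G.head (f D' h)) (darr G δ (D ∪ D') (f D' h)) (D ∪ D')) →
      TWins G z x δ v t D

/-- `TWins` holds at a state iff the traveler is at `z` or can, for every admissible
announcement, pick some available arc leading to a winning state. -/
theorem twins_iff (G : TempGraph V E) (z : V) (x δ : ℕ) (v : V) (t : ℕ) (D : Finset E) :
    TWins G z x δ v t D ↔
      (v = z ∨ ∀ D' : Finset E, Announce G x v t D D' →
        ∃ e : E, G.tail e = v ∧ t ≤ dtime G δ (D ∪ D') e ∧
          TWins G z x δ (G.head e) (darr G δ (D ∪ D') e) (D ∪ D')) := by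
  constructor
  · rintro (_ | ⟨v, t, D, f, hf, hw⟩)
    · exact Or.inl rfl
    · exact Or.inr fun D' h => ⟨f D' h, (hf D' h).1, (hf D' h).2, hw D' h⟩
  · rintro (rfl | h)
    · exact TWins.win t D
    · classical
      choose f h1 h2 h3 using h
      exact TWins.move v t D f (fun D' h => ⟨h1 D' h, h2 D' h⟩) h3

/-- `Forces G x δ Adm Goal v t D`: from the game state `(v, t, D)`, against an adversary
that may only delay arcs satisfying `Adm`, the traveler can force the play to reach a game
state satisfying `Goal`. -/
inductive Forces (G : TempGraph V E) (x δ : ℕ) (Adm : E → Prop)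
    (Goal : V → ℕ → Finset E → Prop) : V → ℕ → Finset E → Prop
  | done (v : V) (t : ℕ) (D : Finset E) : Goal v t D → Forces G x δ Adm Goal v t D
  | move (v : V) (t : ℕ) (D : Finset E)
      (f : ∀ D' : Finset E, Announce G x v t D D' → (∀ e ∈ D', Adm e) → E)
      (hf : ∀ (D' : Finset E) (h : Announce G x v t D D') (ha : ∀ e ∈ D', Adm e),
        G.tail (f D' h ha) = v ∧ t ≤ dtime G δ (D ∪ D') (f D' h ha)) :
      (∀ (D' : Finset E) (h : Announce G x v t D D') (ha : ∀ e ∈ D', Adm e),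
        Forces G x δ Adm Goal (G.head (f D' h ha)) (darr G δ (D ∪ D') (f D' h ha)) (D ∪ D')) →
      Forces G x δ Adm Goal v t D

/-- One round of the robust connection game, as a relation between game states
`(v, t, D)`: the traveler is at `v ≠ z` at timestamp `t`, the adversary announces an
admissible set `D'` of delays, and the traveler traverses an available arc `e` of
`G_(D ∪ D', δ)` with tail `v`, arriving at `head e` at timestamp `arr_{G_(D ∪ D',δ)}(e)`. -/
def StepRel (G : TempGraph V E) (z : V) (x δ : ℕ) (p q : V × ℕ × Finset E) : Prop :=
  p.1 ≠ z ∧ ∃ (D' : Finset E) (e : E),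
    Announce G x p.1 p.2.1 p.2.2 D' ∧ G.tail e = p.1 ∧
    p.2.1 ≤ dtime G δ (p.2.2 ∪ D') e ∧
    q = (G.head e, darr G δ (p.2.2 ∪ D') e, p.2.2 ∪ D')

/-- The set of game states reachable in a play of the robust connection game
`(G, s, z, x, δ)`: the traveler starts at `s` at timestamp `1` with no arc delayed, and in
each round (from a vertex `≠ z`) the adversary announces an admissible set `D'` of delays
and the traveler traverses an available arc. -/
inductive Reach (G : TempGraph V E) (s z : V) (x δ : ℕ) : V → ℕ → Finset E → Prop
  | init : Reach G s z x δ s 1 ∅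
  | step (v : V) (t : ℕ) (D D' : Finset E) (e : E) :
      Reach G s z x δ v t D → v ≠ z → Announce G x v t D D' →
      G.tail e = v → t ≤ dtime G δ (D ∪ D') e →
      Reach G s z x δ (G.head e) (darr G δ (D ∪ D') e) (D ∪ D')

end Game

end RCG

namespace RCG

/-- A quantified Boolean formula `φ = Q_1 x_1 … Q_n x_n (C_1 ∧ … ∧ C_m)` in prenex form
with a CNF matrix: `univQ i = true` iff the quantifier `Q_i` is universal (`∀`), and
`lit j i = some true` / `some false` / `none` according to whether the literal `x_i` /
`¬ x_i` occurs in the clause `C_j` / the variable `x_i` does not occur in `C_j`.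
(Indices are 0-based: variable `i` stands for `x_{i+1}`, clause `j` for `C_{j+1}`.) -/
structure QBF (n m : ℕ) where
  univQ : Fin n → Bool
  lit : Fin m → Fin n → Option Bool

/-- The vertices of the reduction instance (0-based indices):
* `S k` is the entry vertex `s_{k+1}` (so `S 0 = s_1 = s` and `S n = s_{n+1}`);
* `Vp i j` is the `j+1`-st inner vertex of the path `P_{i+1}` (the tail of the positive
  arc `e_{i+1}^{j+1}`; `Vp i m` is the extra vertex of a universal gadget);
* `U i j` is the head of the positive arc `e_{i+1}^{j+1}` (carrying an escape arc);
* `Vb i j`, `Ub i j` are the corresponding vertices of `P̄_{i+1}` and of the negative arcs;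
* `C j` is the clause-gadget entry `c_{j+1}` (so `C m = c_{m+1}`);
* `W` is the fresh vertex `v` adjacent to `s_{n+1}`, and `Z` is the destination `z`. -/
inductive Vtx (n m : ℕ) : Type where
  | S : Fin (n + 1) → Vtx n m
  | U : Fin n → Fin (m + 1) → Vtx n m
  | Vp : Fin n → Fin (m + 1) → Vtx n m
  | Ub : Fin n → Fin m → Vtx n m
  | Vb : Fin n → Fin m → Vtx n m
  | C : Fin (m + 1) → Vtx n m
  | W : Vtx n m
  | Z : Vtx n m
  deriving DecidableEq

/-- Names for the temporal arcs of the reduction instance: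
* `posPath i k` / `negPath i k`: the `k`-th arc of the path `P_{i+1}` / `P̄_{i+1}`;
* `pos i j` / `neg i j`: the positive / negative arc `e_{i+1}^{j+1}` / `ē_{i+1}^{j+1}`;
* `escP i j` / `escN i j` / `escW`: escape arcs to `z`;
* `toC` / `toW`: the arcs from `s_{n+1}` to `c_1` and to the fresh vertex `v = W`;
* `clIn j i b` / `clOut j i b`: the clause-gadget arcs `c_{j+1} → v_{i+1}^{j+1}` (resp.
  `v̄`) and `u_{i+1}^{j+1}` (resp. `ū`) `→ c_{j+2}` for the literal `x_{i+1}` (`b = true`)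
  or `¬x_{i+1}` (`b = false`) of clause `C_{j+1}`;
* `final`: the arc from `c_{m+1}` to `z`. -/
inductive ArcName (n m : ℕ) : Type where
  | posPath : Fin n → Fin (m + 2) → ArcName n m
  | negPath : Fin n → Fin (m + 1) → ArcName n m
  | pos : Fin n → Fin (m + 1) → ArcName n m
  | neg : Fin n → Fin m → ArcName n m
  | escP : Fin n → Fin (m + 1) → ArcName n m
  | escN : Fin n → Fin m → ArcName n m
  | toC : ArcName n m
  | toW : ArcName n m
  | escW : ArcName n m
  | clIn : Fin m → Fin n → Bool → ArcName n m
  | clOut : Fin m → Fin n → Bool → ArcName n m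
  | final : ArcName n m
  deriving DecidableEq

variable {n m : ℕ}

/-- Number of inner vertices of the path `P_{i+1}`: `m` in an existential gadget and
`m + 1` in a universal gadget (which has the extra vertex `v_{i+1}^{m+1}`). -/
def posLen (φ : QBF n m) (i : Fin n) : ℕ := if φ.univQ i then m + 1 else m

theorem posLen_le (φ : QBF n m) (i : Fin n) : posLen φ i ≤ m + 1 := by
  unfold posLen; split <;> omega

/-- `tS m k` is the time label `t_{s_{k+1}} = k · 2(m + 2)` of the outgoing arcs of the
entry vertex `s_{k+1}` (this is `(i − 1) · 2(m + 2)` for `s_i`, 1-based). -/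
def tS (m k : ℕ) : ℕ := k * (2 * (m + 2))

/-- `tC n m j` is the time label `t_{c_{j+1}} = t_{s_{n+1}} + 1 + 3 j` of the outgoing
arcs of the clause entry vertex `c_{j+1}`. -/
def tC (n m j : ℕ) : ℕ := tS m n + 1 + 3 * j

/-- Tail vertex of each arc of the reduction instance. -/
def aTail (_φ : QBF n m) : ArcName n m → Vtx n m
  | .posPath i k =>
      if _h : 0 < k.val then .Vp i ⟨k.val - 1, by have := k.isLt; omega⟩
      else .S i.castSucc
  | .negPath i k =>
      if _h : 0 < k.val then .Vb i ⟨k.val - 1, by have := k.isLt; omega⟩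
      else .S i.castSucc
  | .pos i j => .Vp i j
  | .neg i j => .Vb i j
  | .escP i j => .U i j
  | .escN i j => .Ub i j
  | .toC => .S (Fin.last n)
  | .toW => .S (Fin.last n)
  | .escW => .W
  | .clIn j _ _ => .C j.castSucc
  | .clOut j i b => if b then .U i j.castSucc else .Ub i j
  | .final => .C (Fin.last m)

/-- Head vertex of each arc of the reduction instance. -/
def aHead (φ : QBF n m) : ArcName n m → Vtx n m
  | .posPath i k =>
      if h : k.val < posLen φ i then .Vp i ⟨k.val, lt_of_lt_of_le h (posLen_le φ i)⟩
      else .S i.succ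
  | .negPath i k =>
      if h : k.val < m then .Vb i ⟨k.val, h⟩ else .S i.succ
  | .pos i j => .U i j
  | .neg i j => .Ub i j
  | .escP _ _ => .Z
  | .escN _ _ => .Z
  | .toC => .C ⟨0, Nat.succ_pos m⟩
  | .toW => .W
  | .escW => .Z
  | .clIn j i b => if b then .Vp i j.castSucc else .Vb i j
  | .clOut j _ _ => .C j.succ
  | .final => .Z

/-- Time label of each arc of the reduction instance: the arcs of `P_{i+1}` and `P̄_{i+1}`
leave two time units apart starting at `t_{s_{i+1}}` (in a universal gadget all arcs of
`P_{i+1}` except the first leave one time unit earlier); the positive/negative arcs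
`e^{j+1}` leave at `t_{c_{j+1}}` and the escape arcs at `t_{c_{j+1}} + 1`; the arcs from
`s_{n+1}` leave at `t_{s_{n+1}}` and the escape arc from `W` at `t_{s_{n+1}} + 1`; the
clause-gadget in/out arcs leave at `t_{c_{j+1}}` and `t_{c_{j+1}} + 2`, and the final arc
at `t_{c_{m+1}}`. -/
def aTime (φ : QBF n m) : ArcName n m → ℕ
  | .posPath i k =>
      if φ.univQ i ∧ 0 < k.val then tS m i.val + 2 * k.val - 1
      else tS m i.val + 2 * k.val
  | .negPath i k => tS m i.val + 2 * k.val
  | .pos _ j => tC n m j.val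
  | .neg _ j => tC n m j.val
  | .escP _ j => tC n m j.val + 1
  | .escN _ j => tC n m j.val + 1
  | .toC => tS m n
  | .toW => tS m n
  | .escW => tS m n + 1
  | .clIn j _ _ => tC n m j.val
  | .clOut j _ _ => tC n m j.val + 2
  | .final => tC n m m

/-- Which arc names are really present in the reduction instance built from `φ`:
the path `P_{i+1}` has `posLen φ i + 1` arcs; the extra positive arc `e_{i+1}^{m+1}` and
its escape arc exist only in universal gadgets; clause-gadget arcs exist exactly for the
literals occurring in the clause. -/
def AValid (φ : QBF n m) : ArcName n m → Prop
  | .posPath i k => k.val ≤ posLen φ i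
  | .pos i j => j.val < m ∨ φ.univQ i = true
  | .escP i j => j.val < m ∨ φ.univQ i = true
  | .clIn j i b => φ.lit j i = some b
  | .clOut j i b => φ.lit j i = some b
  | _ => True

/-- The temporal arcs of the reduction instance built from `φ`. -/
def Arc (φ : QBF n m) : Type := { a : ArcName n m // AValid φ a }

instance (φ : QBF n m) : DecidableEq (Arc φ) := Subtype.instDecidableEq

/-- The temporal graph of the reduction instance built from `φ`; every traversal time is
`1`. -/
def RGraph (φ : QBF n m) : TempGraph (Vtx n m) (Arc φ) where
  tail e := aTail φ e.val
  head e := aHead φ e.val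
  time e := aTime φ e.val
  len _ := 1

/-- `|∀|`, the number of universally quantified variables of `φ`. -/
def numForall (φ : QBF n m) : ℕ :=
  (Finset.univ.filter fun i : Fin n => φ.univQ i = true).card

/-- The delay budget `x = n(m + |∀|) + 1` of the reduction instance. -/
def budget (φ : QBF n m) : ℕ := n * (m + numForall φ) + 1

/-- The positive arc `e_{i+1}^{j+1}` (for a clause index `j < m`). -/
def posArc (φ : QBF n m) (i : Fin n) (j : Fin m) : Arc φ :=
  ⟨.pos i j.castSucc, Or.inl (by simp)⟩

/-- The positive arc `e_{i+1}^{j+1}` of a universal gadget (including the extra arc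
`e_{i+1}^{m+1}` for `j = m`). -/
def posArcU (φ : QBF n m) (i : Fin n) (hu : φ.univQ i = true) (j : Fin (m + 1)) : Arc φ :=
  ⟨.pos i j, Or.inr hu⟩

/-- The negative arc `ē_{i+1}^{j+1}`. -/
def negArc (φ : QBF n m) (i : Fin n) (j : Fin m) : Arc φ :=
  ⟨.neg i j, trivial⟩

/-- The `k`-th arc of the path `P_{i+1}` (`k = 0` is the arc leaving `s_{i+1}`). -/
def posPathArc (φ : QBF n m) (i : Fin n) (k : Fin (m + 2)) (h : k.val ≤ posLen φ i) :
    Arc φ :=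
  ⟨.posPath i k, h⟩

/-- The `k`-th arc of the path `P̄_{i+1}`. -/
def negPathArc (φ : QBF n m) (i : Fin n) (k : Fin (m + 1)) : Arc φ :=
  ⟨.negPath i k, trivial⟩

end RCG

namespace RCG

theorem existential_aux {n m : ℕ} (φ : QBF n m) (i : Fin n) (hex : φ.univQ i = false) :
    ∀ c k (hkc : k + c = m) (t : ℕ), t ≤ tS m i.val + 2 * k →
    ∀ D : Finset (Arc φ),
    Forces (RGraph φ) (budget φ) 1
      (fun e => (∃ k', e.val = ArcName.posPath i k') ∨ (∃ k', e.val = ArcName.negPath i k'))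
      (fun v t' _ => v = Vtx.S i.succ ∧ t' ≤ tS m (i.val + 1))
      (aTail φ (ArcName.posPath i ⟨k, by omega⟩)) t D := by
  intro c
  induction c with
  | zero =>
    intro k hkc t ht D
    have hk : k ≤ posLen φ i := by simp [posLen, hex]; omega
    refine Forces.move _ _ _
      (fun _ _ _ => posPathArc φ i ⟨k, by omega⟩ hk) ?_ ?_
    · intro D' h ha
      refine ⟨rfl, ?_⟩
      have htime : (RGraph φ).time (posPathArc φ i ⟨k, by omega⟩ hk)
          = tS m i.val + 2 * k := by
        simp [RGraph, posPathArc, aTime, hex]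
      unfold dtime
      split <;> omega
    · intro D' h ha
      refine Forces.done _ _ _ ⟨?_, ?_⟩
      · show (RGraph φ).head (posPathArc φ i ⟨k, by omega⟩ hk) = Vtx.S i.succ
        have : ¬ (k < posLen φ i) := by simp [posLen, hex]; omega
        simp [RGraph, posPathArc, aHead, this]
      · have htime : (RGraph φ).time (posPathArc φ i ⟨k, by omega⟩ hk)
            = tS m i.val + 2 * k := by
          simp [RGraph, posPathArc, aTime, hex]
        have hlen : (RGraph φ).len (posPathArc φ i ⟨k, by omega⟩ hk) = 1 := rfl
        have hts : tS m (i.val + 1) = tS m i.val + 2 * (m + 2) := by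
          unfold tS; ring
        unfold darr dtime
        split <;> omega
  | succ c ih =>
    intro k hkc t ht D
    have hk : k ≤ posLen φ i := by simp [posLen, hex]; omega
    refine Forces.move _ _ _
      (fun _ _ _ => posPathArc φ i ⟨k, by omega⟩ hk) ?_ ?_
    · intro D' h ha
      refine ⟨rfl, ?_⟩
      have htime : (RGraph φ).time (posPathArc φ i ⟨k, by omega⟩ hk)
          = tS m i.val + 2 * k := by
        simp [RGraph, posPathArc, aTime, hex]
      unfold dtime
      split <;> omega
    · intro D' h ha
      have hhead : (RGraph φ).head (posPathArc φ i ⟨k, by omega⟩ hk)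
          = aTail φ (ArcName.posPath i ⟨k + 1, by omega⟩) := by
        have hkm : k < posLen φ i := by simp [posLen, hex]; omega
        simp [RGraph, posPathArc, aHead, aTail, hkm]
      rw [hhead]
      refine ih (k + 1) (by omega) _ ?_ _
      have htime : (RGraph φ).time (posPathArc φ i ⟨k, by omega⟩ hk)
          = tS m i.val + 2 * k := by
        simp [RGraph, posPathArc, aTime, hex]
      have hlen : (RGraph φ).len (posPathArc φ i ⟨k, by omega⟩ hk) = 1 := rfl
      unfold darr dtime
      split <;> omega

/-- Observation 1: in the robust connection game on the reduction instance,
if the traveler arrives at the entry vertex `s_i` of an existential gadget `𝒢^∃_i` at a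
timestamp `t ≤ t_{s_i}`, then the adversary cannot prevent the traveler from arriving at
`s_{i+1}` at a timestamp `t' ≤ t_{s_{i+1}}` by delaying any or all arcs of the paths `P_i`
and `P̄_i`: the traveler can force arrival at `s_{i+1}` by time `t_{s_{i+1}}` against any
adversary that only delays arcs of `P_i` and `P̄_i`. -/
theorem existential_path_traversal (n m : ℕ) (φ : QBF n m) (i : Fin n)
    (hex : φ.univQ i = false) (t : ℕ) (ht : t ≤ tS m i.val)
    (D : Finset (Arc φ)) (hD : D.card ≤ budget φ) :
    Forces (RGraph φ) (budget φ) 1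
      (fun e => (∃ k, e.val = ArcName.posPath i k) ∨ (∃ k, e.val = ArcName.negPath i k))
      (fun v t' _ => v = Vtx.S i.succ ∧ t' ≤ tS m (i.val + 1))
      (Vtx.S i.castSucc) t D := by
  have h := existential_aux φ i hex m 0 (by omega) t (by omega) D
  simpa [aTail] using h

end RCG
end

section
/- In the robust connection game on the reduction instance: if the traveler arrives at the entry vertex s_i of an existential gadget 𝒢^∃_i at a timestamp t ≤ t_{s_i}, then either the traveler can reach z, or the traveler arrives at s_{i+1} at a timestamp t' ≤ t_{s_{i+1}} via P_i (respectively via P̄_i) and the adversary has delayed all m positive arcs e_i^1, …, e_i^m (respectively all m negative arcs ē_i^1, …, ē_i^m). -/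
/-!
The traveler walks along `P_i`. Standing at the tail of the positive arc `e_i^j`, they
follow the path if `e_i^j` has been delayed and otherwise take `e_i^j` and then its escape
arc to `z`: the escape arc leaves one unit after `e_i^j` does, so it is caught exactly
when `e_i^j` was not delayed. Each arc of `P_i` leaves two units after the previous one,
which absorbs the possible delay of one unit, so the traveler reaches `s_{i+1}` no later
than `t_{s_i} + 2m + 2 ≤ t_{s_{i+1}}`, having seen all of `e_i^1, …, e_i^m` delayed.
-/

namespace RCG

section Delays

variable {V E : Type} [DecidableEq E] {G : TempGraph V E} {δ : ℕ} {D : Finset E} {e : E}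

theorem time_le_dtime : G.time e ≤ dtime G δ D e := by
  unfold dtime; split <;> omega

theorem darr_le : darr G δ D e ≤ G.time e + δ + G.len e := by
  unfold darr dtime; split <;> omega

theorem darr_of_notMem (h : e ∉ D) : darr G δ D e = G.time e + G.len e := by
  simp [darr, dtime, h]

theorem Forces.of_exists_arc {x : ℕ} {Adm : E → Prop} {Goal : V → ℕ → Finset E → Prop}
    {v : V} {t : ℕ}
    (h : ∀ D', Announce G x v t D D' → ∃ e, G.tail e = v ∧ t ≤ G.time e ∧
      Forces G x δ Adm Goal (G.head e) (darr G δ (D ∪ D') e) (D ∪ D')) :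
    Forces G x δ Adm Goal v t D := by
  choose f hf using h
  exact .move v t D (fun D' h _ => f D' h)
    (fun D' h _ => ⟨(hf D' h).1, (hf D' h).2.1.trans time_le_dtime⟩)
    fun D' h _ => (hf D' h).2.2

end Delays

section ReductionInstance

variable {n m : ℕ} {φ : QBF n m} {i : Fin n} {x : ℕ} {Adm : Arc φ → Prop}

theorem tS_succ (k : ℕ) : tS m (k + 1) = tS m k + 2 * (m + 2) := by
  unfold tS; ring

theorem tS_add_lt_tC (i : Fin n) (j : ℕ) : tS m i + 2 * m + 4 < tC n m j := by
  have : tS m (i + 1) ≤ tS m n := Nat.mul_le_mul_right _ i.isLt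
  rw [tS_succ] at this
  unfold tC
  omega

def GadgetExit (φ : QBF n m) (i : Fin n) : Vtx n m → ℕ → Finset (Arc φ) → Prop :=
  fun v t D =>
    v = Vtx.Z ∨
      (v = Vtx.S i.succ ∧ t ≤ tS m (i.val + 1) ∧
        ((∀ j : Fin m, posArc φ i j ∈ D) ∨ (∀ j : Fin m, negArc φ i j ∈ D)))

def existsPathArc (hex : φ.univQ i = false) (k : ℕ) (hk : k ≤ m) : Arc φ :=
  posPathArc φ i ⟨k, by omega⟩ (by simpa [posLen, hex])

section ExistentialGadget

variable (hex : φ.univQ i = false)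
include hex

@[simp]
theorem time_existsPathArc (k : ℕ) (hk : k ≤ m) :
    (RGraph φ).time (existsPathArc hex k hk) = tS m i + 2 * k := by
  simp [RGraph, existsPathArc, posPathArc, aTime, hex]

theorem darr_existsPathArc_le (D : Finset (Arc φ)) (k : ℕ) (hk : k ≤ m) :
    darr (RGraph φ) 1 D (existsPathArc hex k hk) ≤ tS m i + 2 * k + 2 :=
  darr_le.trans_eq (by rw [time_existsPathArc]; rfl)

theorem tail_existsPathArc_zero :
    (RGraph φ).tail (existsPathArc hex 0 (Nat.zero_le m)) = Vtx.S i.castSucc := rfl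

theorem tail_existsPathArc_succ (k : ℕ) (hk : k < m) :
    (RGraph φ).tail (existsPathArc hex (k + 1) hk) = Vtx.Vp i ⟨k, by omega⟩ := by
  simp only [RGraph, existsPathArc, posPathArc, aTail]
  exact dif_pos k.succ_pos

theorem head_existsPathArc_of_lt (k : ℕ) (hk : k < m) :
    (RGraph φ).head (existsPathArc hex k hk.le) = Vtx.Vp i ⟨k, by omega⟩ := by
  simp [RGraph, existsPathArc, posPathArc, aHead, posLen, hex, hk]

theorem head_existsPathArc_last :
    (RGraph φ).head (existsPathArc hex m le_rfl) = Vtx.S i.succ := by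
  simp [RGraph, existsPathArc, posPathArc, aHead, posLen, hex]

end ExistentialGadget

theorem forces_gadgetExit_of_escape (j : Fin m) {t : ℕ} (ht : t ≤ tC n m j + 1)
    (D : Finset (Arc φ)) :
    Forces (RGraph φ) x 1 Adm (GadgetExit φ i)
      (Vtx.U i j.castSucc) t D :=
  .of_exists_arc fun _ _ =>
    ⟨⟨.escP i j.castSucc, Or.inl (by simp)⟩, rfl, ht, .done _ _ _ (Or.inl rfl)⟩

theorem forces_gadgetExit_of_head_existsPathArc (hex : φ.univQ i = false) {k : ℕ}
    (hk : k ≤ m) {t : ℕ} (ht : t ≤ tS m i + 2 * k + 2) {D : Finset (Arc φ)}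
    (hD : ∀ j : Fin m, j.val < k → posArc φ i j ∈ D) :
    Forces (RGraph φ) x 1 Adm (GadgetExit φ i)
      ((RGraph φ).head (existsPathArc hex k hk)) t D := by
  induction hk using Nat.decreasingInduction generalizing t D with
  | self =>
    rw [head_existsPathArc_last]
    refine .done _ _ _ (Or.inr ⟨rfl, ?_, Or.inl fun j => hD j j.isLt⟩)
    rw [tS_succ]
    omega
  | of_succ k hk ih =>
    rw [head_existsPathArc_of_lt hex k hk]
    refine .of_exists_arc fun D' _ => ?_
    have ht_pos : t ≤ tC n m k := (tS_add_lt_tC i k).le.trans' (by omega)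
    by_cases hdelayed : posArc φ i ⟨k, hk⟩ ∈ D ∪ D'
    · refine ⟨existsPathArc hex (k + 1) hk, tail_existsPathArc_succ hex k hk,
        by rw [time_existsPathArc]; omega,
        ih ((darr_existsPathArc_le hex _ _ _).trans (by omega)) fun j hj => ?_⟩
      rcases Nat.lt_succ_iff_lt_or_eq.mp hj with hj | hj
      · exact Finset.mem_union_left _ (hD j hj)
      · rwa [show j = ⟨k, hk⟩ from Fin.ext hj]
    · refine ⟨posArc φ i ⟨k, hk⟩, rfl, ht_pos, ?_⟩
      rw [darr_of_notMem hdelayed]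
      exact forces_gadgetExit_of_escape ⟨k, hk⟩ le_rfl _

end ReductionInstance

theorem existential_gadget_traversal_general (n m : ℕ) (φ : QBF n m) (i : Fin n)
    (hex : φ.univQ i = false) (t : ℕ) (ht : t ≤ tS m i.val)
    (D : Finset (Arc φ)) :
    Forces (RGraph φ) (budget φ) 1 (fun _ => True)
      (fun v t' D₂ =>
        v = Vtx.Z ∨
        (v = Vtx.S i.succ ∧ t' ≤ tS m (i.val + 1) ∧
          ((∀ j : Fin m, posArc φ i j ∈ D₂) ∨ (∀ j : Fin m, negArc φ i j ∈ D₂))))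
      (Vtx.S i.castSucc) t D := by
  refine .of_exists_arc fun D' _ =>
    ⟨existsPathArc hex 0 (Nat.zero_le m), tail_existsPathArc_zero hex, by simpa, ?_⟩
  exact forces_gadgetExit_of_head_existsPathArc hex _ (darr_existsPathArc_le hex _ 0 _)
    fun j hj => absurd hj j.val.not_lt_zero

/-- Lemma on existential gadgets: in the robust connection game on the
reduction instance, if the traveler arrives at the entry vertex `s_i` of an existential
gadget `𝒢^∃_i` at a timestamp `t ≤ t_{s_i}`, then the traveler can force the play to reach
a state in which either they are at `z`, or they are at `s_{i+1}` at a timestamp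
`t' ≤ t_{s_{i+1}}` and the adversary has delayed all `m` positive arcs `e_i^j` (traversal
via `P_i`) or all `m` negative arcs `ē_i^j` (traversal via `P̄_i`). -/
theorem existential_gadget_traversal (n m : ℕ) (φ : QBF n m) (i : Fin n)
    (hex : φ.univQ i = false) (t : ℕ) (ht : t ≤ tS m i.val)
    (D : Finset (Arc φ)) (hD : D.card ≤ budget φ) :
    Forces (RGraph φ) (budget φ) 1 (fun _ => True)
      (fun v t' D₂ =>
        v = Vtx.Z ∨
        (v = Vtx.S i.succ ∧ t' ≤ tS m (i.val + 1) ∧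
          ((∀ j : Fin m, posArc φ i j ∈ D₂) ∨ (∀ j : Fin m, negArc φ i j ∈ D₂))))
      (Vtx.S i.castSucc) t D :=
  existential_gadget_traversal_general n m φ i hex t ht D

end RCG
end
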